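/- arXiv:1802.07453 — 3 statements merged into one kernel-verified Lean document; each statement's English description precedes it below -/
import Mathlib

section
/- Let H : ℝ^{2n} → ℝ be smooth and τ ∈ ℝ, and let 𝒜(v) = ∫₀¹ [ p(t)·q̇(t) − H(v(t−τ)) ] dt on loops v = (q,p). A loop v is a critical point of 𝒜 if and only if v̇(t) = X_H(v(t)) for all t ∈ ℝ; i.e., the critical point equation is the undelayed Hamiltonian equation. -/
open MeasureTheory intervalIntegral Real

noncomputable section

/-- Phase space ℝ^{2n}, with points written v = (q, p). -/
abbrev Phase (n : ℕ) := (Fin n → ℝ) × (Fin n → ℝ)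

/-- The standard symplectic form ω(u,w) = Σ_j (u^q_j w^p_j − u^p_j w^q_j). -/
def symForm {n : ℕ} (u w : Phase n) : ℝ :=
  ∑ j, (u.1 j * w.2 j - u.2 j * w.1 j)

/-- The Hamiltonian vector field X_H = (∂H/∂p, −∂H/∂q). -/
def hamVF {n : ℕ} (H : Phase n → ℝ) (x : Phase n) : Phase n :=
  (fun i => fderiv ℝ H x (0, Pi.single i 1),
   fun i => -fderiv ℝ H x (Pi.single i 1, 0))

/-- A loop is a smooth 1-periodic map ℝ → ℝ^{2n}. -/
def IsLoop {n : ℕ} (v : ℝ → Phase n) : Prop :=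
  ContDiff ℝ (⊤ : ℕ∞) v ∧ ∀ t, v (t + 1) = v t

/-- First variation of a functional 𝒜 at v in direction v̂. -/
def firstVariation {n : ℕ} (A : (ℝ → Phase n) → ℝ) (v vh : ℝ → Phase n) : ℝ :=
  deriv (fun s : ℝ => A (fun t => v t + s • vh t)) 0

/-- v is a critical point of 𝒜 if the first variation vanishes in all loop directions. -/
def IsCritPt {n : ℕ} (A : (ℝ → Phase n) → ℝ) (v : ℝ → Phase n) : Prop :=
  ∀ vh, IsLoop vh → firstVariation A v vh = 0

end

noncomputable section Stmt1Aux

namespace Stmt1Aux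

variable {n : ℕ}

lemma hasDerivAt_fst {v : ℝ → Phase n} (hv : Differentiable ℝ v) (j : Fin n) (t : ℝ) :
    HasDerivAt (fun t => (v t).1 j) ((deriv v t).1 j) t := by
  let L : Phase n →L[ℝ] ℝ :=
    (ContinuousLinearMap.proj j).comp (ContinuousLinearMap.fst ℝ _ _)
  exact (L.hasFDerivAt).comp_hasDerivAt t (hv t).hasDerivAt

lemma hasDerivAt_snd {v : ℝ → Phase n} (hv : Differentiable ℝ v) (j : Fin n) (t : ℝ) :
    HasDerivAt (fun t => (v t).2 j) ((deriv v t).2 j) t := by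
  let L : Phase n →L[ℝ] ℝ :=
    (ContinuousLinearMap.proj j).comp (ContinuousLinearMap.snd ℝ _ _)
  exact (L.hasFDerivAt).comp_hasDerivAt t (hv t).hasDerivAt

lemma contDiff_deriv {v : ℝ → Phase n} (hv : ContDiff ℝ (⊤ : ℕ∞) v) :
    ContDiff ℝ (⊤ : ℕ∞) (deriv v) := by
  have h1 : ContDiff ℝ (⊤ : ℕ∞) (fderiv ℝ v) := hv.fderiv_right (by simp)
  have h2 : ContDiff ℝ (⊤ : ℕ∞) (fun t => fderiv ℝ v t 1) := h1.clm_apply contDiff_const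
  have : deriv v = fun t => fderiv ℝ v t 1 := by
    funext t; rw [fderiv_apply_one_eq_deriv]
  rw [this]; exact h2

lemma deriv_periodic {v : ℝ → Phase n} (hp : ∀ t, v (t + 1) = v t) (t : ℝ) :
    deriv v (t + 1) = deriv v t := by
  have h : (fun x => v (x + 1)) = v := funext hp
  rw [← deriv_comp_add_const v 1 t, h]

lemma fderiv_decomp (L : Phase n →L[ℝ] ℝ) (x : Phase n) :
    L x = (∑ j, x.1 j * L (Pi.single j 1, 0)) + ∑ j, x.2 j * L (0, Pi.single j 1) := by
  have hx : x = (∑ j, x.1 j • ((Pi.single j (1:ℝ) : Fin n → ℝ), (0 : Fin n → ℝ)))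
      + ∑ j, x.2 j • ((0 : Fin n → ℝ), (Pi.single j (1:ℝ) : Fin n → ℝ)) := by
    have h1 : ∀ (y : Fin n → ℝ), (∑ j, y j • (Pi.single j (1:ℝ) : Fin n → ℝ)) = y := by
      intro y; funext i
      simp [Finset.sum_apply, Pi.single_apply, mul_ite, Finset.sum_ite_eq]
    refine Prod.ext ?_ ?_
    · simp only [Prod.fst_add, Prod.fst_sum, Prod.smul_fst]
      simp [h1]
    · simp only [Prod.snd_add, Prod.snd_sum, Prod.smul_snd]
      simp [h1]
  conv_lhs => rw [hx]
  rw [map_add, map_sum, map_sum]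
  congr 1
  · exact Finset.sum_congr rfl fun j _ => by rw [_root_.map_smul, smul_eq_mul]
  · exact Finset.sum_congr rfl fun j _ => by rw [_root_.map_smul, smul_eq_mul]

lemma zero_of_integral_zero (g : ℝ → ℝ) (hg : Continuous g) (hper : ∀ t, g (t + 1) = g t)
    (hnn : ∀ t, 0 ≤ g t) (hint : (∫ t in (0:ℝ)..1, g t) = 0) : ∀ t, g t = 0 := by
  intro t
  by_contra hne
  have hpos : 0 < g t := (hnn t).lt_of_ne (Ne.symm hne)
  -- the integral over [t - 1/2, t + 1/2] is also 0
  have hper' : Function.Periodic g 1 := hper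
  have hshift : (∫ s in (t - 1/2)..(t - 1/2 + 1), g s) = ∫ s in (0:ℝ)..1, g s := by
    simpa using hper'.intervalIntegral_add_eq (t - 1/2) 0
  have hint2 : (∫ s in (t - 1/2)..(t + 1/2), g s) = 0 := by
    have : t + 1/2 = t - 1/2 + 1 := by ring
    rw [this, hshift, hint]
  -- find a small interval around t where g > g t / 2
  have hev : ∀ᶠ x in nhds t, g x ∈ Set.Ioi (g t / 2) :=
    (hg.continuousAt).preimage_mem_nhds (Ioi_mem_nhds (by linarith))
  obtain ⟨δ, hδ, hball⟩ := Metric.eventually_nhds_iff.mp hev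
  set ε : ℝ := min (δ / 2) (1 / 2) with hε
  have hε0 : 0 < ε := lt_min (by linarith) (by norm_num)
  have hεδ : ε < δ := lt_of_le_of_lt (min_le_left _ _) (by linarith)
  have hεhalf : ε ≤ 1 / 2 := min_le_right _ _
  have hsub : ∀ x ∈ Set.Icc (t - ε) (t + ε), g t / 2 < g x := by
    intro x hx
    apply hball
    rw [Real.dist_eq, abs_lt]
    constructor <;> [linarith [hx.1]; linarith [hx.2]]
  have hmidpos : 0 < ∫ s in (t - ε)..(t + ε), g s := by
    apply intervalIntegral_pos_of_pos_on (hg.intervalIntegrable _ _)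
    · intro x hx
      have := hsub x ⟨hx.1.le, hx.2.le⟩
      linarith [hnn t]
    · linarith
  have h1 : (0:ℝ) ≤ ∫ s in (t - 1/2)..(t - ε), g s :=
    intervalIntegral.integral_nonneg (by linarith) (fun u _ => hnn u)
  have h2 : (0:ℝ) ≤ ∫ s in (t + ε)..(t + 1/2), g s :=
    intervalIntegral.integral_nonneg (by linarith) (fun u _ => hnn u)
  have hsplit : (∫ s in (t - 1/2)..(t + 1/2), g s)
      = (∫ s in (t - 1/2)..(t - ε), g s) + (∫ s in (t - ε)..(t + ε), g s)
        + ∫ s in (t + ε)..(t + 1/2), g s := by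
    rw [intervalIntegral.integral_add_adjacent_intervals (hg.intervalIntegrable _ _)
        (hg.intervalIntegrable _ _),
      intervalIntegral.integral_add_adjacent_intervals (hg.intervalIntegrable _ _)
        (hg.intervalIntegrable _ _)]
  rw [hsplit] at hint2
  linarith

lemma hasDerivAt_Hint (H : Phase n → ℝ) (hH : ContDiff ℝ (⊤ : ℕ∞) H) (v vh : ℝ → Phase n)
    (hv : Continuous v) (hvh : Continuous vh) :
    HasDerivAt (fun s : ℝ => ∫ t in (0:ℝ)..1, H (v t + s • vh t))
      (∫ t in (0:ℝ)..1, fderiv ℝ H (v t) (vh t)) 0 := by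
  have hdH : Continuous (fderiv ℝ H) := (hH.fderiv_right (m := (⊤ : ℕ∞)) (by simp)).continuous
  have hHc : Continuous H := hH.continuous
  set F : ℝ → ℝ → ℝ := fun x t => H (v t + x • vh t) with hF
  set F' : ℝ → ℝ → ℝ := fun x t => fderiv ℝ H (v t + x • vh t) (vh t) with hF'
  -- continuity of the joint map
  have hjoint : Continuous (fun p : ℝ × ℝ => v p.2 + p.1 • vh p.2) := by fun_prop
  have hφ : Continuous (fun p : ℝ × ℝ => fderiv ℝ H (v p.2 + p.1 • vh p.2) (vh p.2)) :=
    (hdH.comp hjoint).clm_apply (hvh.comp continuous_snd)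
  obtain ⟨C, hC⟩ := (IsCompact.prod (isCompact_Icc (a := (-1:ℝ)) (b := 1))
      (isCompact_Icc (a := (0:ℝ)) (b := 1))).exists_bound_of_continuousOn
      hφ.continuousOn
  have key := intervalIntegral.hasDerivAt_integral_of_dominated_loc_of_deriv_le
    (μ := volume) (F := F) (F' := F') (x₀ := (0:ℝ)) (a := 0) (b := 1)
    (bound := fun _ => C) (s := Metric.ball (0:ℝ) 1) (Metric.ball_mem_nhds _ one_pos)
    ?_ ?_ ?_ ?_ ?_ ?_
  · have h2 := key.2
    have hrw : (∫ t in (0:ℝ)..1, F' 0 t) = ∫ t in (0:ℝ)..1, fderiv ℝ H (v t) (vh t) := by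
      congr 1; funext t; simp [hF']
    rw [hrw] at h2
    convert h2 using 2
  · filter_upwards with x
    exact ((hHc.comp (by fun_prop : Continuous (fun t => v t + x • vh t))).aestronglyMeasurable).restrict
  · exact (hHc.comp (by fun_prop : Continuous (fun t => v t + (0:ℝ) • vh t))).intervalIntegrable _ _
  · exact (((hdH.comp (by fun_prop : Continuous (fun t => v t + (0:ℝ) • vh t))).clm_apply
      hvh).aestronglyMeasurable).restrict
  · filter_upwards with t ht x hx
    have hx' : x ∈ Set.Icc (-1:ℝ) 1 := by
      rw [Metric.mem_ball, Real.dist_eq, sub_zero] at hx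
      exact ⟨by linarith [abs_lt.mp hx], by linarith [abs_lt.mp hx]⟩
    have ht' : t ∈ Set.Icc (0:ℝ) 1 := by
      rw [Set.uIoc_of_le (by norm_num : (0:ℝ) ≤ 1)] at ht
      exact ⟨ht.1.le, ht.2⟩
    have := hC (x, t) (Set.mk_mem_prod hx' ht')
    simpa [hF'] using this
  · exact intervalIntegrable_const
  · filter_upwards with t ht x hx
    have hin : HasDerivAt (fun y : ℝ => v t + y • vh t) (vh t) x := by
      have h1 : HasDerivAt (fun y : ℝ => y • vh t) ((1:ℝ) • vh t) x :=
        (hasDerivAt_id x).smul_const (vh t)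
      simpa using h1.const_add (v t)
    have hout : HasFDerivAt H (fderiv ℝ H (v t + x • vh t)) (v t + x • vh t) :=
      (hH.differentiable (by simp) _).hasFDerivAt
    exact hout.comp_hasDerivAt x hin

lemma variation_formula (H : Phase n → ℝ) (hH : ContDiff ℝ (⊤ : ℕ∞) H) (τ : ℝ)
    (v vh : ℝ → Phase n) (hv : IsLoop v) (hvh : IsLoop vh) :
    firstVariation (fun w => ∫ t in (0:ℝ)..1,
        ((∑ j, (w t).2 j * (deriv w t).1 j) - H (w (t - τ)))) v vh
    = ∫ t in (0:ℝ)..1, ∑ j,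
        ((vh t).2 j * ((deriv v t).1 j - fderiv ℝ H (v t) (0, Pi.single j 1))
          - (vh t).1 j * ((deriv v t).2 j + fderiv ℝ H (v t) (Pi.single j 1, 0))) := by
  have hdv : Differentiable ℝ v := hv.1.differentiable (by simp)
  have hdvh : Differentiable ℝ vh := hvh.1.differentiable (by simp)
  have hcv : Continuous v := hv.1.continuous
  have hcvh : Continuous vh := hvh.1.continuous
  have hcdv : Continuous (deriv v) := (contDiff_deriv hv.1).continuous
  have hcdvh : Continuous (deriv vh) := (contDiff_deriv hvh.1).continuous
  have hdH : Continuous (fderiv ℝ H) := (hH.fderiv_right (m := (⊤ : ℕ∞)) (by simp)).continuous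
  -- component continuity
  have hvq : ∀ j : Fin n, Continuous fun t => (v t).1 j :=
    fun j => (continuous_apply j).comp hcv.fst
  have hvp : ∀ j : Fin n, Continuous fun t => (v t).2 j :=
    fun j => (continuous_apply j).comp hcv.snd
  have hvhq : ∀ j : Fin n, Continuous fun t => (vh t).1 j :=
    fun j => (continuous_apply j).comp hcvh.fst
  have hvhp : ∀ j : Fin n, Continuous fun t => (vh t).2 j :=
    fun j => (continuous_apply j).comp hcvh.snd
  have hdvq : ∀ j : Fin n, Continuous fun t => (deriv v t).1 j :=
    fun j => (continuous_apply j).comp hcdv.fst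
  have hdvp : ∀ j : Fin n, Continuous fun t => (deriv v t).2 j :=
    fun j => (continuous_apply j).comp hcdv.snd
  have hdvhq : ∀ j : Fin n, Continuous fun t => (deriv vh t).1 j :=
    fun j => (continuous_apply j).comp hcdvh.fst
  have hGc : ∀ w : Phase n, Continuous fun t => fderiv ℝ H (v t) w :=
    fun w => (hdH.comp hcv).clm_apply continuous_const
  -- the pieces
  set K : ℝ → ℝ := fun t => ∑ j, (v t).2 j * (deriv v t).1 j with hKdef
  set B : ℝ → ℝ := fun t => ∑ j, ((vh t).2 j * (deriv v t).1 j
      + (v t).2 j * (deriv vh t).1 j) with hBdef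
  set Cc : ℝ → ℝ := fun t => ∑ j, (vh t).2 j * (deriv vh t).1 j with hCdef
  set g : ℝ → ℝ := fun s => ∫ t in (0:ℝ)..1, H (v t + s • vh t) with hgdef
  have hKc : Continuous K :=
    continuous_finset_sum _ fun j _ => (hvp j).mul (hdvq j)
  have hBc : Continuous B :=
    continuous_finset_sum _ fun j _ =>
      ((hvhp j).mul (hdvq j)).add ((hvp j).mul (hdvhq j))
  have hCcc : Continuous Cc :=
    continuous_finset_sum _ fun j _ => (hvhp j).mul (hdvhq j)
  -- derivative of the deformed loop
  have hderivw : ∀ (s t : ℝ), deriv (fun t' => v t' + s • vh t') t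
      = deriv v t + s • deriv vh t := by
    intro s t
    exact ((hdv t).hasDerivAt.add ((hdvh t).hasDerivAt.const_smul s)).deriv
  -- value of the action along the deformation
  have hAs : ∀ s : ℝ,
      (∫ t in (0:ℝ)..1, ((∑ j, (v t + s • vh t).2 j
          * (deriv (fun t' => v t' + s • vh t') t).1 j)
        - H (v (t - τ) + s • vh (t - τ))))
      = ((∫ t in (0:ℝ)..1, K t) + (s * (∫ t in (0:ℝ)..1, B t)
          + s^2 * ∫ t in (0:ℝ)..1, Cc t)) - g s := by
    intro s
    have hint_eq : ∀ t : ℝ, (∑ j, (v t + s • vh t).2 j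
        * (deriv (fun t' => v t' + s • vh t') t).1 j)
        = K t + (s * B t + s^2 * Cc t) := by
      intro t
      rw [hderivw s t, hKdef, hBdef, hCdef]
      simp only [Prod.snd_add, Prod.smul_snd, Prod.fst_add, Prod.smul_fst,
        Pi.add_apply, Pi.smul_apply, smul_eq_mul]
      rw [Finset.mul_sum, Finset.mul_sum, ← Finset.sum_add_distrib,
        ← Finset.sum_add_distrib]
      exact Finset.sum_congr rfl fun j _ => by ring
    have step1 : (∫ t in (0:ℝ)..1, ((∑ j, (v t + s • vh t).2 j
          * (deriv (fun t' => v t' + s • vh t') t).1 j)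
        - H (v (t - τ) + s • vh (t - τ))))
        = ∫ t in (0:ℝ)..1, ((K t + (s * B t + s^2 * Cc t))
            - H (v (t - τ) + s • vh (t - τ))) := by
      congr 1; funext t; rw [hint_eq t]
    have hHcont : Continuous (fun t : ℝ => H (v (t - τ) + s • vh (t - τ))) := by
      have : Continuous (fun t : ℝ => v (t - τ) + s • vh (t - τ)) := by fun_prop
      exact hH.continuous.comp this
    have hshift : (∫ t in (0:ℝ)..1, H (v (t - τ) + s • vh (t - τ))) = g s := by
      have hper : Function.Periodic (fun u : ℝ => H (v u + s • vh u)) 1 := by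
        intro x; simp only [hv.2 x, hvh.2 x]
      have h1 : (∫ t in (0:ℝ)..1, H (v (t - τ) + s • vh (t - τ)))
          = ∫ u in (0 - τ)..(1 - τ), H (v u + s • vh u) :=
        intervalIntegral.integral_comp_sub_right (fun u => H (v u + s • vh u)) τ
      have h2 := hper.intervalIntegral_add_eq (0 - τ) 0
      rw [h1, hgdef]
      have e1 : (1:ℝ) - τ = 0 - τ + 1 := by ring
      rw [e1, h2]
      norm_num
    rw [step1, intervalIntegral.integral_sub (f := fun t => K t + (s * B t + s^2 * Cc t))
        ((hKc.add ((continuous_const.mul hBc).add (continuous_const.mul hCcc))).intervalIntegrable _ _)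
        (hHcont.intervalIntegrable _ _),
      intervalIntegral.integral_add (g := fun t => s * B t + s^2 * Cc t) (hKc.intervalIntegrable _ _)
        (((continuous_const.mul hBc).add (continuous_const.mul hCcc)).intervalIntegrable _ _),
      intervalIntegral.integral_add (f := fun t => s * B t) (g := fun t => s^2 * Cc t)
          ((continuous_const.mul hBc).intervalIntegrable _ _)
        ((continuous_const.mul hCcc).intervalIntegrable _ _),
      intervalIntegral.integral_const_mul, intervalIntegral.integral_const_mul, hshift]
  -- compute the derivative at 0
  have hg0 : HasDerivAt g (∫ t in (0:ℝ)..1, fderiv ℝ H (v t) (vh t)) 0 :=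
    hasDerivAt_Hint H hH v vh hcv hcvh
  have hpoly : HasDerivAt (fun s : ℝ => (∫ t in (0:ℝ)..1, K t)
      + (s * (∫ t in (0:ℝ)..1, B t) + s^2 * ∫ t in (0:ℝ)..1, Cc t))
      (∫ t in (0:ℝ)..1, B t) 0 := by
    have h1 : HasDerivAt (fun s : ℝ => s * ∫ t in (0:ℝ)..1, B t)
        (∫ t in (0:ℝ)..1, B t) 0 := by
      simpa using (hasDerivAt_id (0:ℝ)).mul_const (∫ t in (0:ℝ)..1, B t)
    have h2 : HasDerivAt (fun s : ℝ => s^2 * ∫ t in (0:ℝ)..1, Cc t) 0 0 := by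
      simpa using (hasDerivAt_pow 2 (0:ℝ)).mul_const (∫ t in (0:ℝ)..1, Cc t)
    simpa using (h1.add h2).const_add (∫ t in (0:ℝ)..1, K t)
  have heq : (fun s : ℝ => (fun w => ∫ t in (0:ℝ)..1,
        ((∑ j, (w t).2 j * (deriv w t).1 j) - H (w (t - τ))))
        (fun t => v t + s • vh t))
      = fun s : ℝ => ((∫ t in (0:ℝ)..1, K t) + (s * (∫ t in (0:ℝ)..1, B t)
          + s^2 * ∫ t in (0:ℝ)..1, Cc t)) - g s := by
    funext s; exact hAs s
  rw [firstVariation, heq, HasDerivAt.deriv (f := fun s : ℝ => ((∫ t in (0:ℝ)..1, K t)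
      + (s * (∫ t in (0:ℝ)..1, B t) + s^2 * ∫ t in (0:ℝ)..1, Cc t)) - g s) (hpoly.sub hg0)]
  -- now the integration by parts and the fderiv decomposition
  have hbyparts : ∀ j : Fin n, (∫ t in (0:ℝ)..1, (v t).2 j * (deriv vh t).1 j)
      = - ∫ t in (0:ℝ)..1, (deriv v t).2 j * (vh t).1 j := by
    intro j
    have h := intervalIntegral.integral_mul_deriv_eq_deriv_mul (a := (0:ℝ)) (b := 1)
      (u := fun t => (v t).2 j) (u' := fun t => (deriv v t).2 j)
      (v := fun t => (vh t).1 j) (v' := fun t => (deriv vh t).1 j)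
      (fun x _ => hasDerivAt_snd hdv j x) (fun x _ => hasDerivAt_fst hdvh j x)
      ((hdvp j).intervalIntegrable _ _) ((hdvhq j).intervalIntegrable _ _)
    have e1 : v 1 = v 0 := by have := hv.2 0; rwa [zero_add] at this
    have e2 : vh 1 = vh 0 := by have := hvh.2 0; rwa [zero_add] at this
    beta_reduce at h
    rw [e1, e2] at h
    rw [h]; ring
  have hBsplit : (∫ t in (0:ℝ)..1, B t)
      = (∫ t in (0:ℝ)..1, ∑ j, (vh t).2 j * (deriv v t).1 j)
        + ∫ t in (0:ℝ)..1, ∑ j, (v t).2 j * (deriv vh t).1 j := by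
    rw [← intervalIntegral.integral_add (f := fun t => ∑ j, (vh t).2 j * (deriv v t).1 j) (g := fun t => ∑ j, (v t).2 j * (deriv vh t).1 j)
      ((continuous_finset_sum _ fun j _ => (hvhp j).mul (hdvq j)).intervalIntegrable _ _)
      ((continuous_finset_sum _ fun j _ => (hvp j).mul (hdvhq j)).intervalIntegrable _ _)]
    congr 1; funext t; rw [hBdef, ← Finset.sum_add_distrib]
  have hparts2 : (∫ t in (0:ℝ)..1, ∑ j, (v t).2 j * (deriv vh t).1 j)
      = - ∫ t in (0:ℝ)..1, ∑ j, (deriv v t).2 j * (vh t).1 j := by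
    rw [intervalIntegral.integral_finset_sum (f := fun j t => (v t).2 j * (deriv vh t).1 j)
        (fun j _ => ((hvp j).mul (hdvhq j)).intervalIntegrable _ _),
      intervalIntegral.integral_finset_sum (f := fun j t => (deriv v t).2 j * (vh t).1 j)
        (fun j _ => ((hdvp j).mul (hvhq j)).intervalIntegrable _ _)]
    rw [← Finset.sum_neg_distrib]
    exact Finset.sum_congr rfl fun j _ => hbyparts j
  have hDdecomp : (∫ t in (0:ℝ)..1, fderiv ℝ H (v t) (vh t))
      = ∫ t in (0:ℝ)..1, ((∑ j, (vh t).1 j * fderiv ℝ H (v t) (Pi.single j 1, 0))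
          + ∑ j, (vh t).2 j * fderiv ℝ H (v t) (0, Pi.single j 1)) := by
    congr 1; funext t; exact fderiv_decomp (fderiv ℝ H (v t)) (vh t)
  rw [hBsplit, hparts2, hDdecomp]
  rw [← intervalIntegral.integral_neg, ← intervalIntegral.integral_add (f := fun t => ∑ j, (vh t).2 j * (deriv v t).1 j) (g := fun t => -∑ j, (deriv v t).2 j * (vh t).1 j)
      ((continuous_finset_sum _ fun j _ => (hvhp j).mul (hdvq j)).intervalIntegrable _ _)
      ((continuous_finset_sum _ fun j _ => (hdvp j).mul (hvhq j)).neg.intervalIntegrable _ _),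
    ← intervalIntegral.integral_sub (f := fun t => (∑ j, (vh t).2 j * (deriv v t).1 j)
        + -∑ j, (deriv v t).2 j * (vh t).1 j)
      (g := fun t => (∑ j, (vh t).1 j * fderiv ℝ H (v t) (Pi.single j 1, 0))
        + ∑ j, (vh t).2 j * fderiv ℝ H (v t) (0, Pi.single j 1))
      (((continuous_finset_sum _ fun j _ => (hvhp j).mul (hdvq j)).add
        (continuous_finset_sum _ fun j _ => (hdvp j).mul (hvhq j)).neg).intervalIntegrable _ _)
      (((continuous_finset_sum _ fun j _ => (hvhq j).mul (hGc _))).add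
        (continuous_finset_sum _ fun j _ => (hvhp j).mul (hGc _)) |>.intervalIntegrable _ _)]
  congr 1; funext t
  rw [← Finset.sum_neg_distrib, ← Finset.sum_add_distrib, ← Finset.sum_add_distrib,
    ← Finset.sum_sub_distrib]
  exact Finset.sum_congr rfl fun j _ => by ring

end Stmt1Aux

end Stmt1Aux

open Stmt1Aux

theorem stmt1 {n : ℕ} (hn : 1 ≤ n) (H : Phase n → ℝ) (hH : ContDiff ℝ (⊤ : ℕ∞) H) (τ : ℝ)
    (v : ℝ → Phase n) (hv : IsLoop v) :
    IsCritPt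
      (fun w => ∫ t in (0:ℝ)..1,
        ((∑ j, (w t).2 j * (deriv w t).1 j) - H (w (t - τ)))) v
      ↔ ∀ t : ℝ, deriv v t = hamVF H (v t) := by
  constructor
  · intro hcrit t0
    set Fq : Fin n → ℝ → ℝ :=
      fun j t => (deriv v t).1 j - fderiv ℝ H (v t) (0, Pi.single j 1) with hFqdef
    set Fp : Fin n → ℝ → ℝ :=
      fun j t => (deriv v t).2 j + fderiv ℝ H (v t) (Pi.single j 1, 0) with hFpdef
    set vh0 : ℝ → Phase n := fun t => (fun j => -(Fp j t), fun j => Fq j t) with hvh0def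
    have hsm_dv : ContDiff ℝ (⊤ : ℕ∞) (deriv v) := contDiff_deriv hv.1
    have hsm_fd : ContDiff ℝ (⊤ : ℕ∞) (fun t => fderiv ℝ H (v t)) :=
      (hH.fderiv_right (m := (⊤ : ℕ∞)) (by simp)).comp hv.1
    have hFqsm : ∀ j, ContDiff ℝ (⊤ : ℕ∞) (Fq j) := fun j =>
      (((ContinuousLinearMap.proj j).comp
          (ContinuousLinearMap.fst ℝ (Fin n → ℝ) (Fin n → ℝ))).contDiff.comp hsm_dv).sub
        (hsm_fd.clm_apply contDiff_const)
    have hFpsm : ∀ j, ContDiff ℝ (⊤ : ℕ∞) (Fp j) := fun j =>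
      (((ContinuousLinearMap.proj j).comp
          (ContinuousLinearMap.snd ℝ (Fin n → ℝ) (Fin n → ℝ))).contDiff.comp hsm_dv).add
        (hsm_fd.clm_apply contDiff_const)
    have hFqper : ∀ j t, Fq j (t + 1) = Fq j t := by
      intro j t; rw [hFqdef]; simp only [deriv_periodic hv.2 t, hv.2 t]
    have hFpper : ∀ j t, Fp j (t + 1) = Fp j t := by
      intro j t; rw [hFpdef]; simp only [deriv_periodic hv.2 t, hv.2 t]
    have hloop : IsLoop vh0 := by
      constructor
      · exact ContDiff.prodMk (contDiff_pi.mpr fun j => (hFpsm j).neg)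
          (contDiff_pi.mpr fun j => hFqsm j)
      · intro t
        rw [hvh0def]
        simp only [hFqper, hFpper]
    have hzero : (∫ t in (0:ℝ)..1, ∑ j,
        ((vh0 t).2 j * ((deriv v t).1 j - fderiv ℝ H (v t) (0, Pi.single j 1))
          - (vh0 t).1 j * ((deriv v t).2 j + fderiv ℝ H (v t) (Pi.single j 1, 0)))) = 0 :=
      (variation_formula H hH τ v vh0 hv hloop).symm.trans (hcrit vh0 hloop)
    set G : ℝ → ℝ := fun t => ∑ j, (Fq j t * Fq j t + Fp j t * Fp j t) with hGdef
    have hGint : (∫ t in (0:ℝ)..1, G t) = 0 := by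
      rw [← hzero]; congr 1; funext t
      exact Finset.sum_congr rfl fun j _ => by rw [hvh0def]; ring
    have hGc : Continuous G := continuous_finset_sum _ fun j _ =>
      (((hFqsm j).continuous).mul ((hFqsm j).continuous)).add
        (((hFpsm j).continuous).mul ((hFpsm j).continuous))
    have hGper : ∀ t, G (t + 1) = G t := by
      intro t; rw [hGdef]; simp only [hFqper, hFpper]
    have hGnn : ∀ t, 0 ≤ G t := fun t =>
      Finset.sum_nonneg fun j _ => add_nonneg (mul_self_nonneg _) (mul_self_nonneg _)
    have hG0 := zero_of_integral_zero G hGc hGper hGnn hGint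
    have hterm : ∀ j : Fin n, Fq j t0 * Fq j t0 + Fp j t0 * Fp j t0 = 0 := by
      intro j
      have := (Finset.sum_eq_zero_iff_of_nonneg
        (fun j _ => add_nonneg (mul_self_nonneg (Fq j t0)) (mul_self_nonneg (Fp j t0)))).mp
        (hG0 t0)
      exact this j (Finset.mem_univ j)
    have hFq0 : ∀ j, Fq j t0 = 0 := by
      intro j; nlinarith [hterm j, mul_self_nonneg (Fq j t0), mul_self_nonneg (Fp j t0)]
    have hFp0 : ∀ j, Fp j t0 = 0 := by
      intro j; nlinarith [hterm j, mul_self_nonneg (Fq j t0), mul_self_nonneg (Fp j t0)]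
    refine Prod.ext ?_ ?_
    · funext i
      have := hFq0 i
      rw [hFqdef] at this
      beta_reduce at this
      simp only [hamVF]
      linarith
    · funext i
      have := hFp0 i
      rw [hFpdef] at this
      beta_reduce at this
      simp only [hamVF]
      linarith
  · intro heq vh hvh
    rw [variation_formula H hH τ v vh hv hvh]
    have hpt : ∀ t : ℝ, (∑ j : Fin n,
        ((vh t).2 j * ((deriv v t).1 j - fderiv ℝ H (v t) (0, Pi.single j 1))
          - (vh t).1 j * ((deriv v t).2 j + fderiv ℝ H (v t) (Pi.single j 1, 0)))) = 0 := by
      intro t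
      apply Finset.sum_eq_zero
      intro j _
      rw [heq t]
      simp [hamVF]
    rw [show (∫ t in (0:ℝ)..1, ∑ j : Fin n,
        ((vh t).2 j * ((deriv v t).1 j - fderiv ℝ H (v t) (0, Pi.single j 1))
          - (vh t).1 j * ((deriv v t).2 j + fderiv ℝ H (v t) (Pi.single j 1, 0))))
        = ∫ _t in (0:ℝ)..1, (0:ℝ) from by
      congr 1; funext t; exact hpt t]
    simp
end

section
/- Let H, K : ℝ^{2n} → ℝ be smooth and τ ∈ ℝ, and let 𝒜(v) = ∫₀¹ [ p(t)·q̇(t) − H(v(t)) K(v(t−τ)) ] dt on loops v = (q,p). Then a loop v is a critical point of 𝒜 if and only if v satisfies the delay equation v̇(t) = H(v(t+τ)) X_K(v(t)) + K(v(t−τ)) X_H(v(t)) for all t ∈ ℝ. -/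
open MeasureTheory intervalIntegral Real

section Aux
variable {n : ℕ}

lemma contDiff_deriv {E : Type*} [NormedAddCommGroup E] [NormedSpace ℝ E]
    {f : ℝ → E} (h : ContDiff ℝ (⊤ : ℕ∞) f) : ContDiff ℝ (⊤ : ℕ∞) (deriv f) := by
  exact (contDiff_infty_iff_deriv.mp h).2

lemma contDiff_fderiv_apply (K : Phase n → ℝ) (hK : ContDiff ℝ (⊤ : ℕ∞) K)
    (v : ℝ → Phase n) (hv : ContDiff ℝ (⊤ : ℕ∞) v) (u : Phase n) :
    ContDiff ℝ (⊤ : ℕ∞) (fun t => fderiv ℝ K (v t) u) :=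
  ((hK.fderiv_right le_rfl).comp hv).clm_apply contDiff_const

lemma deriv_periodic {E : Type*} [NormedAddCommGroup E] [NormedSpace ℝ E]
    {f : ℝ → E} (h : ∀ t, f (t + 1) = f t) (t : ℝ) : deriv f (t + 1) = deriv f t := by
  have : f = fun s => f (s + 1) := by funext s; rw [h]
  conv_rhs => rw [this]
  rw [deriv_comp_add_const]

lemma clm_expand (L : Phase n →L[ℝ] ℝ) (u : Phase n) :
    L u = ∑ j, (u.1 j * L (Pi.single j 1, 0) + u.2 j * L (0, Pi.single j 1)) := by
  have hu : u = (∑ j, u.1 j • ((Pi.single j 1 : Fin n → ℝ), (0 : Fin n → ℝ)))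
      + (∑ j, u.2 j • ((0 : Fin n → ℝ), (Pi.single j 1 : Fin n → ℝ))) := by
    ext i
    · simp [Finset.sum_apply, Prod.fst_sum, Pi.single_apply, mul_ite]
    · simp [Finset.sum_apply, Prod.snd_sum, Pi.single_apply, mul_ite]
  calc L u = L (∑ j, u.1 j • ((Pi.single j 1 : Fin n → ℝ), (0 : Fin n → ℝ)))
      + L (∑ j, u.2 j • ((0 : Fin n → ℝ), (Pi.single j 1 : Fin n → ℝ))) := by rw [← map_add, ← hu]
    _ = _ := by
      rw [map_sum, map_sum, ← Finset.sum_add_distrib]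
      refine Finset.sum_congr rfl fun j _ => ?_
      rw [L.map_smul, L.map_smul, smul_eq_mul, smul_eq_mul]

end Aux

noncomputable section Main
variable {n : ℕ}

/-- The Euler–Lagrange defect. -/
def dEL (H K : Phase n → ℝ) (τ : ℝ) (v : ℝ → Phase n) (t : ℝ) : Phase n :=
  deriv v t - (H (v (t + τ)) • hamVF K (v t) + K (v (t - τ)) • hamVF H (v t))

lemma contDiff_hamVF_comp (K : Phase n → ℝ) (hK : ContDiff ℝ (⊤ : ℕ∞) K)
    (v : ℝ → Phase n) (hv : ContDiff ℝ (⊤ : ℕ∞) v) :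
    ContDiff ℝ (⊤ : ℕ∞) (fun t => hamVF K (v t)) := by
  apply ContDiff.prodMk
  · exact contDiff_pi.mpr fun i => contDiff_fderiv_apply K hK v hv _
  · exact contDiff_pi.mpr fun i => (contDiff_fderiv_apply K hK v hv _).neg

lemma contDiff_dEL (H K : Phase n → ℝ) (hH : ContDiff ℝ (⊤ : ℕ∞) H) (hK : ContDiff ℝ (⊤ : ℕ∞) K)
    (τ : ℝ) (v : ℝ → Phase n) (hv : ContDiff ℝ (⊤ : ℕ∞) v) :
    ContDiff ℝ (⊤ : ℕ∞) (dEL H K τ v) := by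
  have h1 : ContDiff ℝ (⊤ : ℕ∞) (fun t : ℝ => v (t + τ)) := hv.comp (contDiff_id.add contDiff_const)
  have h2 : ContDiff ℝ (⊤ : ℕ∞) (fun t : ℝ => v (t - τ)) := hv.comp (contDiff_id.sub contDiff_const)
  exact (contDiff_deriv hv).sub
    (((hH.comp h1).smul (contDiff_hamVF_comp K hK v hv)).add
      ((hK.comp h2).smul (contDiff_hamVF_comp H hH v hv)))

lemma periodic_dEL (H K : Phase n → ℝ) (τ : ℝ) (v : ℝ → Phase n)
    (hper : ∀ t, v (t + 1) = v t) (t : ℝ) : dEL H K τ v (t + 1) = dEL H K τ v t := by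
  have e1 : t + 1 + τ = t + τ + 1 := by ring
  have e2 : t + 1 - τ = t - τ + 1 := by ring
  simp only [dEL, deriv_periodic hper, e1, e2, hper]


/-- The integrand `F s t` of the action along the varied loop. -/
def Ffun (H K : Phase n → ℝ) (τ : ℝ) (v vh : ℝ → Phase n) (s t : ℝ) : ℝ :=
  (∑ j, ((v t).2 j + s * (vh t).2 j) * ((deriv v t).1 j + s * (deriv vh t).1 j))
    - H (v t + s • vh t) * K (v (t - τ) + s • vh (t - τ))

/-- Its `s`-derivative. -/
def Gfun (H K : Phase n → ℝ) (τ : ℝ) (v vh : ℝ → Phase n) (s t : ℝ) : ℝ :=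
  (∑ j, ((vh t).2 j * ((deriv v t).1 j + s * (deriv vh t).1 j)
      + ((v t).2 j + s * (vh t).2 j) * (deriv vh t).1 j))
    - ((fderiv ℝ H (v t + s • vh t) (vh t)) * K (v (t - τ) + s • vh (t - τ))
      + H (v t + s • vh t) * (fderiv ℝ K (v (t - τ) + s • vh (t - τ)) (vh (t - τ))))

lemma hasDerivAt_Ffun (H K : Phase n → ℝ) (hH : ContDiff ℝ (⊤ : ℕ∞) H) (hK : ContDiff ℝ (⊤ : ℕ∞) K)
    (τ : ℝ) (v vh : ℝ → Phase n) (s t : ℝ) :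
    HasDerivAt (fun s => Ffun H K τ v vh s t) (Gfun H K τ v vh s t) s := by
  have hsum : HasDerivAt
      (fun s => ∑ j, ((v t).2 j + s * (vh t).2 j) * ((deriv v t).1 j + s * (deriv vh t).1 j))
      (∑ j, ((vh t).2 j * ((deriv v t).1 j + s * (deriv vh t).1 j)
        + ((v t).2 j + s * (vh t).2 j) * (deriv vh t).1 j)) s := by
    refine HasDerivAt.fun_sum fun j _ => ?_
    have h1 : HasDerivAt (fun s : ℝ => (v t).2 j + s * (vh t).2 j) ((vh t).2 j) s := by
      simpa using ((hasDerivAt_mul_const ((vh t).2 j)).const_add ((v t).2 j))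
    have h2 : HasDerivAt (fun s : ℝ => (deriv v t).1 j + s * (deriv vh t).1 j)
        ((deriv vh t).1 j) s := by
      simpa using ((hasDerivAt_mul_const ((deriv vh t).1 j)).const_add ((deriv v t).1 j))
    simpa using h1.fun_mul h2
  have hin : ∀ (a b : Phase n), HasDerivAt (fun s : ℝ => a + s • b) b s := by
    intro a b
    simpa using ((hasDerivAt_id s).smul_const b).const_add a
  have hHd : HasDerivAt (fun s : ℝ => H (v t + s • vh t))
      (fderiv ℝ H (v t + s • vh t) (vh t)) s :=
    (hH.differentiable (by simp) _).hasFDerivAt.comp_hasDerivAt s (hin (v t) (vh t))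
  have hKd : HasDerivAt (fun s : ℝ => K (v (t - τ) + s • vh (t - τ)))
      (fderiv ℝ K (v (t - τ) + s • vh (t - τ)) (vh (t - τ))) s :=
    (hK.differentiable (by simp) _).hasFDerivAt.comp_hasDerivAt s (hin (v (t - τ)) (vh (t - τ)))
  simpa [Ffun, Gfun] using hsum.fun_sub (hHd.fun_mul hKd)

lemma continuous_Gfun (H K : Phase n → ℝ) (hH : ContDiff ℝ (⊤ : ℕ∞) H) (hK : ContDiff ℝ (⊤ : ℕ∞) K)
    (τ : ℝ) (v vh : ℝ → Phase n) (hv : ContDiff ℝ (⊤ : ℕ∞) v) (hvh : ContDiff ℝ (⊤ : ℕ∞) vh) :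
    Continuous (fun q : ℝ × ℝ => Gfun H K τ v vh q.1 q.2) := by
  have cv : Continuous v := hv.continuous
  have cvh : Continuous vh := hvh.continuous
  have cdv : Continuous (deriv v) := (contDiff_deriv hv).continuous
  have cdvh : Continuous (deriv vh) := (contDiff_deriv hvh).continuous
  have cH' : Continuous (fderiv ℝ H) := (hH.fderiv_right (by exact_mod_cast le_top : ((⊤ : ℕ∞) : WithTop ℕ∞) + 1 ≤ ((⊤ : ℕ∞) : WithTop ℕ∞))).continuous
  have cK' : Continuous (fderiv ℝ K) := (hK.fderiv_right (by exact_mod_cast le_top : ((⊤ : ℕ∞) : WithTop ℕ∞) + 1 ≤ ((⊤ : ℕ∞) : WithTop ℕ∞))).continuous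
  have csub : Continuous (fun q : ℝ × ℝ => q.2 - τ) := (continuous_snd).sub continuous_const
  have c1 : Continuous (fun q : ℝ × ℝ => v q.2 + q.1 • vh q.2) :=
    (cv.comp continuous_snd).add (continuous_fst.smul (cvh.comp continuous_snd))
  have c2 : Continuous (fun q : ℝ × ℝ => v (q.2 - τ) + q.1 • vh (q.2 - τ)) :=
    (cv.comp csub).add (continuous_fst.smul (cvh.comp csub))
  apply Continuous.sub
  · apply continuous_finset_sum
    intro j _
    have e1 : Continuous (fun q : ℝ × ℝ => (vh q.2).2 j) :=
      ((continuous_apply j).comp (continuous_snd.comp (cvh.comp continuous_snd)))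
    have e2 : Continuous (fun q : ℝ × ℝ => (deriv v q.2).1 j + q.1 * (deriv vh q.2).1 j) :=
      (((continuous_apply j).comp (continuous_fst.comp (cdv.comp continuous_snd)))).add
        (continuous_fst.mul ((continuous_apply j).comp (continuous_fst.comp (cdvh.comp continuous_snd))))
    have e3 : Continuous (fun q : ℝ × ℝ => (v q.2).2 j + q.1 * (vh q.2).2 j) :=
      (((continuous_apply j).comp (continuous_snd.comp (cv.comp continuous_snd)))).add
        (continuous_fst.mul e1)
    have e4 : Continuous (fun q : ℝ × ℝ => (deriv vh q.2).1 j) :=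
      ((continuous_apply j).comp (continuous_fst.comp (cdvh.comp continuous_snd)))
    exact (e1.mul e2).add (e3.mul e4)
  · apply Continuous.add
    · exact ((cH'.comp c1).clm_apply (cvh.comp continuous_snd)).mul
        ((hK.continuous).comp c2)
    · exact ((hH.continuous).comp c1).mul
        ((cK'.comp c2).clm_apply (cvh.comp csub))

lemma continuous_Ffun (H K : Phase n → ℝ) (hH : ContDiff ℝ (⊤ : ℕ∞) H) (hK : ContDiff ℝ (⊤ : ℕ∞) K)
    (τ : ℝ) (v vh : ℝ → Phase n) (hv : ContDiff ℝ (⊤ : ℕ∞) v) (hvh : ContDiff ℝ (⊤ : ℕ∞) vh) (s : ℝ) :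
    Continuous (fun t => Ffun H K τ v vh s t) := by
  have cv : Continuous v := hv.continuous
  have cvh : Continuous vh := hvh.continuous
  have cdv : Continuous (deriv v) := (contDiff_deriv hv).continuous
  have cdvh : Continuous (deriv vh) := (contDiff_deriv hvh).continuous
  have csub : Continuous (fun t : ℝ => t - τ) := continuous_id.sub continuous_const
  apply Continuous.sub
  · apply continuous_finset_sum
    intro j _
    exact (((continuous_apply j).comp (continuous_snd.comp cv)).add
        (continuous_const.mul ((continuous_apply j).comp (continuous_snd.comp cvh)))).mul
      (((continuous_apply j).comp (continuous_fst.comp cdv)).add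
        (continuous_const.mul ((continuous_apply j).comp (continuous_fst.comp cdvh))))
  · exact ((hH.continuous).comp (cv.add ((continuous_const : Continuous fun _ : ℝ => s).smul cvh))).mul
      ((hK.continuous).comp ((cv.comp csub).add ((continuous_const : Continuous fun _ : ℝ => s).smul (cvh.comp csub))))


lemma firstVariation_eq (H K : Phase n → ℝ) (hH : ContDiff ℝ (⊤ : ℕ∞) H) (hK : ContDiff ℝ (⊤ : ℕ∞) K)
    (τ : ℝ) (v vh : ℝ → Phase n) (hv : ContDiff ℝ (⊤ : ℕ∞) v) (hvh : ContDiff ℝ (⊤ : ℕ∞) vh) :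
    firstVariation
      (fun w => ∫ t in (0:ℝ)..1,
        ((∑ j, (w t).2 j * (deriv w t).1 j) - H (w t) * K (w (t - τ)))) v vh
      = ∫ t in (0:ℝ)..1, Gfun H K τ v vh 0 t := by
  have hdv : Differentiable ℝ v := hv.differentiable (by simp)
  have hdvh : Differentiable ℝ vh := hvh.differentiable (by simp)
  have hA : (fun s : ℝ => ∫ t in (0:ℝ)..1,
      ((∑ j, ((fun t => v t + s • vh t) t).2 j * (deriv (fun t => v t + s • vh t) t).1 j)
        - H ((fun t => v t + s • vh t) t) * K ((fun t => v t + s • vh t) (t - τ))))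
      = fun s => ∫ t in (0:ℝ)..1, Ffun H K τ v vh s t := by
    funext s
    refine intervalIntegral.integral_congr fun t _ => ?_
    have hd : deriv (fun t => v t + s • vh t) t = deriv v t + s • deriv vh t :=
      ((hdv t).hasDerivAt.add (((hdvh t).hasDerivAt).const_smul s)).deriv
    simp only [Ffun, hd, Prod.fst_add, Prod.snd_add, Prod.smul_fst, Prod.smul_snd,
      Pi.add_apply, Pi.smul_apply, smul_eq_mul]
  obtain ⟨C, hC⟩ := ((isCompact_closedBall (0:ℝ) 1).prod
      (isCompact_uIcc : IsCompact (Set.uIcc (0:ℝ) 1))).exists_bound_of_continuousOn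
    ((continuous_Gfun H K hH hK τ v vh hv hvh).continuousOn)
  have hder := intervalIntegral.hasDerivAt_integral_of_dominated_loc_of_deriv_le
    (F := fun s t => Ffun H K τ v vh s t) (F' := fun s t => Gfun H K τ v vh s t)
    (x₀ := (0:ℝ)) (bound := fun _ => C) (a := 0) (b := 1) (μ := volume) (Metric.ball_mem_nhds 0 one_pos)
    (Filter.Eventually.of_forall fun s =>
      (continuous_Ffun H K hH hK τ v vh hv hvh s).aestronglyMeasurable)
    ((continuous_Ffun H K hH hK τ v vh hv hvh 0).intervalIntegrable _ _)
    (((continuous_Gfun H K hH hK τ v vh hv hvh).comp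
      (continuous_const.prodMk continuous_id)).aestronglyMeasurable)
    (MeasureTheory.ae_of_all _ fun t ht x hx =>
      hC (x, t) ⟨Metric.ball_subset_closedBall hx, Set.uIoc_subset_uIcc ht⟩)
    intervalIntegrable_const
    (MeasureTheory.ae_of_all _ fun t ht x hx => hasDerivAt_Ffun H K hH hK τ v vh x t)
  rw [firstVariation, hA]
  exact hder.2.deriv


lemma ibp (v vh : ℝ → Phase n) (hv : IsLoop v) (hvh : IsLoop vh) :
    ∫ t in (0:ℝ)..1, (∑ j, (v t).2 j * (deriv vh t).1 j)
      = - ∫ t in (0:ℝ)..1, (∑ j, (deriv v t).2 j * (vh t).1 j) := by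
  obtain ⟨hv1, hv2⟩ := hv
  obtain ⟨hh1, hh2⟩ := hvh
  have hdv : Differentiable ℝ v := hv1.differentiable (by simp)
  have hdvh : Differentiable ℝ vh := hh1.differentiable (by simp)
  have cdv : Continuous (deriv v) := (contDiff_deriv hv1).continuous
  have cdvh : Continuous (deriv vh) := (contDiff_deriv hh1).continuous
  have key : ∀ j : Fin n, ∫ t in (0:ℝ)..1,
      ((deriv v t).2 j * (vh t).1 j + (v t).2 j * (deriv vh t).1 j) = 0 := by
    intro j
    have hu : ∀ x ∈ Set.uIcc (0:ℝ) 1, HasDerivAt (fun t => (v t).2 j) ((deriv v x).2 j) x := by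
      intro x _
      have := ((ContinuousLinearMap.proj j).comp
        (ContinuousLinearMap.snd ℝ (Fin n → ℝ) (Fin n → ℝ))).hasFDerivAt.comp_hasDerivAt x
        (hdv x).hasDerivAt
      exact this
    have hw : ∀ x ∈ Set.uIcc (0:ℝ) 1, HasDerivAt (fun t => (vh t).1 j) ((deriv vh x).1 j) x := by
      intro x _
      have := ((ContinuousLinearMap.proj j).comp
        (ContinuousLinearMap.fst ℝ (Fin n → ℝ) (Fin n → ℝ))).hasFDerivAt.comp_hasDerivAt x
        (hdvh x).hasDerivAt
      exact this
    have h := intervalIntegral.integral_deriv_mul_eq_sub hu hw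
      (((continuous_apply j).comp (continuous_snd.comp cdv)).intervalIntegrable _ _)
      (((continuous_apply j).comp (continuous_fst.comp cdvh)).intervalIntegrable _ _)
    rw [h]
    have e1 : v 1 = v 0 := by simpa using hv2 0
    have e2 : vh 1 = vh 0 := by simpa using hh2 0
    rw [e1, e2]; ring
  have c1 : ∀ j : Fin n, Continuous (fun t => (deriv v t).2 j * (vh t).1 j) := fun j =>
    ((continuous_apply j).comp (continuous_snd.comp cdv)).mul
      ((continuous_apply j).comp (continuous_fst.comp hh1.continuous))
  have c2 : ∀ j : Fin n, Continuous (fun t => (v t).2 j * (deriv vh t).1 j) := fun j =>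
    ((continuous_apply j).comp (continuous_snd.comp hv1.continuous)).mul
      ((continuous_apply j).comp (continuous_fst.comp cdvh))
  have hsplit : ∫ t in (0:ℝ)..1,
      (∑ j, ((deriv v t).2 j * (vh t).1 j + (v t).2 j * (deriv vh t).1 j)) = 0 := by
    rw [intervalIntegral.integral_finset_sum (fun j _ =>
      (((c1 j).fun_add (c2 j)).intervalIntegrable _ _))]
    simp [key]
  have hadd : ∫ t in (0:ℝ)..1,
      (∑ j, ((deriv v t).2 j * (vh t).1 j + (v t).2 j * (deriv vh t).1 j))
      = (∫ t in (0:ℝ)..1, (∑ j, (deriv v t).2 j * (vh t).1 j))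
        + ∫ t in (0:ℝ)..1, (∑ j, (v t).2 j * (deriv vh t).1 j) := by
    rw [← intervalIntegral.integral_add
      ((continuous_finset_sum _ fun j _ => c1 j).intervalIntegrable _ _)
      ((continuous_finset_sum _ fun j _ => c2 j).intervalIntegrable _ _)]
    congr 1; funext t; exact Finset.sum_add_distrib
  rw [hadd] at hsplit
  linarith

lemma shift_integral (H K : Phase n → ℝ) (τ : ℝ) (v vh : ℝ → Phase n)
    (hv2 : ∀ t, v (t + 1) = v t) (hh2 : ∀ t, vh (t + 1) = vh t) :
    ∫ t in (0:ℝ)..1, H (v t) * fderiv ℝ K (v (t - τ)) (vh (t - τ))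
      = ∫ t in (0:ℝ)..1, H (v (t + τ)) * fderiv ℝ K (v t) (vh t) := by
  set φ : ℝ → ℝ := fun t => H (v (t + τ)) * fderiv ℝ K (v t) (vh t) with hφ
  have hper : Function.Periodic φ 1 := by
    intro t
    simp only [hφ, show t + 1 + τ = t + τ + 1 by ring, hv2, hh2]
  have heq : ∀ t : ℝ, H (v t) * fderiv ℝ K (v (t - τ)) (vh (t - τ)) = φ (t - τ) := by
    intro t; simp only [hφ, sub_add_cancel]
  calc ∫ t in (0:ℝ)..1, H (v t) * fderiv ℝ K (v (t - τ)) (vh (t - τ))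
      = ∫ t in (0:ℝ)..1, φ (t - τ) := intervalIntegral.integral_congr fun t _ => heq t
    _ = ∫ t in (0:ℝ)-τ..1-τ, φ t := intervalIntegral.integral_comp_sub_right _ τ
    _ = ∫ t in (0:ℝ)..1, φ t := by
        rw [show (0:ℝ) - τ = -τ by ring, show (1:ℝ) - τ = -τ + 1 by ring]
        simpa using hper.intervalIntegral_add_eq (-τ) 0


lemma firstVariation_value (H K : Phase n → ℝ) (hH : ContDiff ℝ (⊤ : ℕ∞) H) (hK : ContDiff ℝ (⊤ : ℕ∞) K)
    (τ : ℝ) (v vh : ℝ → Phase n) (hv : IsLoop v) (hvh : IsLoop vh) :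
    firstVariation
      (fun w => ∫ t in (0:ℝ)..1,
        ((∑ j, (w t).2 j * (deriv w t).1 j) - H (w t) * K (w (t - τ)))) v vh
      = ∫ t in (0:ℝ)..1,
          (∑ j, ((dEL H K τ v t).1 j * (vh t).2 j - (dEL H K τ v t).2 j * (vh t).1 j)) := by
  obtain ⟨hv1, hv2⟩ := hv
  obtain ⟨hh1, hh2⟩ := hvh
  have cv : Continuous v := hv1.continuous
  have cvh : Continuous vh := hh1.continuous
  have cdv : Continuous (deriv v) := (contDiff_deriv hv1).continuous
  have cdvh : Continuous (deriv vh) := (contDiff_deriv hh1).continuous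
  have cH' : Continuous (fderiv ℝ H) := (hH.fderiv_right (by exact_mod_cast le_top : ((⊤ : ℕ∞) : WithTop ℕ∞) + 1 ≤ ((⊤ : ℕ∞) : WithTop ℕ∞))).continuous
  have cK' : Continuous (fderiv ℝ K) := (hK.fderiv_right (by exact_mod_cast le_top : ((⊤ : ℕ∞) : WithTop ℕ∞) + 1 ≤ ((⊤ : ℕ∞) : WithTop ℕ∞))).continuous
  have csub : Continuous (fun t : ℝ => t - τ) := continuous_id.sub continuous_const
  have cadd : Continuous (fun t : ℝ => t + τ) := continuous_id.add continuous_const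
  have ca : Continuous (fun t => ∑ j, (vh t).2 j * (deriv v t).1 j) :=
    continuous_finset_sum _ fun j _ =>
      ((continuous_apply j).comp (continuous_snd.comp cvh)).mul
        ((continuous_apply j).comp (continuous_fst.comp cdv))
  have cb : Continuous (fun t => ∑ j, (v t).2 j * (deriv vh t).1 j) :=
    continuous_finset_sum _ fun j _ =>
      ((continuous_apply j).comp (continuous_snd.comp cv)).mul
        ((continuous_apply j).comp (continuous_fst.comp cdvh))
  have cb' : Continuous (fun t => ∑ j, (deriv v t).2 j * (vh t).1 j) :=
    continuous_finset_sum _ fun j _ =>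
      ((continuous_apply j).comp (continuous_snd.comp cdv)).mul
        ((continuous_apply j).comp (continuous_fst.comp cvh))
  have cc : Continuous (fun t => fderiv ℝ H (v t) (vh t) * K (v (t - τ))) :=
    ((cH'.comp cv).clm_apply cvh).mul (hK.continuous.comp (cv.comp csub))
  have cd : Continuous (fun t => H (v t) * fderiv ℝ K (v (t - τ)) (vh (t - τ))) :=
    (hH.continuous.comp cv).mul ((cK'.comp (cv.comp csub)).clm_apply (cvh.comp csub))
  have cd' : Continuous (fun t => H (v (t + τ)) * fderiv ℝ K (v t) (vh t)) :=
    (hH.continuous.comp (cv.comp cadd)).mul ((cK'.comp cv).clm_apply cvh)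
  rw [firstVariation_eq H K hH hK τ v vh hv1 hh1]
  have hG0 : ∀ t, Gfun H K τ v vh 0 t
      = ((∑ j, (vh t).2 j * (deriv v t).1 j) + ∑ j, (v t).2 j * (deriv vh t).1 j)
        - (fderiv ℝ H (v t) (vh t) * K (v (t - τ))
          + H (v t) * fderiv ℝ K (v (t - τ)) (vh (t - τ))) := by
    intro t
    simp only [Gfun, zero_smul, add_zero, zero_mul, Finset.sum_add_distrib]
  rw [intervalIntegral.integral_congr (fun t _ => hG0 t),
    intervalIntegral.integral_sub ((ca.fun_add cb).intervalIntegrable _ _)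
      ((cc.fun_add cd).intervalIntegrable _ _),
    intervalIntegral.integral_add (ca.intervalIntegrable _ _) (cb.intervalIntegrable _ _),
    intervalIntegral.integral_add (cc.intervalIntegrable _ _) (cd.intervalIntegrable _ _),
    ibp v vh ⟨hv1, hv2⟩ ⟨hh1, hh2⟩, shift_integral H K τ v vh hv2 hh2]
  have hpt : ∀ t, (∑ j, ((dEL H K τ v t).1 j * (vh t).2 j - (dEL H K τ v t).2 j * (vh t).1 j))
      = ((∑ j, (vh t).2 j * (deriv v t).1 j) - ∑ j, (deriv v t).2 j * (vh t).1 j)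
        - (fderiv ℝ H (v t) (vh t) * K (v (t - τ))
          + H (v (t + τ)) * fderiv ℝ K (v t) (vh t)) := by
    intro t
    rw [clm_expand (fderiv ℝ H (v t)) (vh t), clm_expand (fderiv ℝ K (v t)) (vh t),
      Finset.sum_mul, Finset.mul_sum, ← Finset.sum_add_distrib, ← Finset.sum_sub_distrib,
      ← Finset.sum_sub_distrib]
    refine Finset.sum_congr rfl fun j _ => ?_
    simp only [dEL, hamVF, Prod.fst_sub, Prod.snd_sub, Prod.fst_add, Prod.snd_add,
      Prod.smul_fst, Prod.smul_snd, Pi.sub_apply, Pi.add_apply, Pi.smul_apply, smul_eq_mul]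
    ring
  rw [intervalIntegral.integral_congr (fun t _ => hpt t),
    intervalIntegral.integral_sub ((ca.fun_sub cb').intervalIntegrable _ _)
      ((cc.fun_add cd').intervalIntegrable _ _),
    intervalIntegral.integral_sub (ca.intervalIntegrable _ _) (cb'.intervalIntegrable _ _),
    intervalIntegral.integral_add (cc.intervalIntegrable _ _) (cd'.intervalIntegrable _ _)]
  ring

end Main

theorem stmt3 {n : ℕ} (hn : 1 ≤ n) (H K : Phase n → ℝ)
    (hH : ContDiff ℝ (⊤ : ℕ∞) H) (hK : ContDiff ℝ (⊤ : ℕ∞) K) (τ : ℝ)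
    (v : ℝ → Phase n) (hv : IsLoop v) :
    IsCritPt
      (fun w => ∫ t in (0:ℝ)..1,
        ((∑ j, (w t).2 j * (deriv w t).1 j) - H (w t) * K (w (t - τ)))) v
      ↔ ∀ t : ℝ,
          deriv v t = H (v (t + τ)) • hamVF K (v t) + K (v (t - τ)) • hamVF H (v t) := by
  constructor
  · intro hcrit t
    set g := dEL H K τ v with hg
    set vh : ℝ → Phase n := fun t => ((fun j => -(g t).2 j), (fun j => (g t).1 j)) with hvh
    have hgsmooth : ContDiff ℝ (⊤ : ℕ∞) g := contDiff_dEL H K hH hK τ v hv.1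
    have hvh_smooth : ContDiff ℝ (⊤ : ℕ∞) vh := by
      apply ContDiff.prodMk
      · exact contDiff_pi.mpr fun j => ((contDiff_pi.mp hgsmooth.snd) j).neg
      · exact contDiff_pi.mpr fun j => (contDiff_pi.mp hgsmooth.fst) j
    have hgper : ∀ s, g (s + 1) = g s := periodic_dEL H K τ v hv.2
    have hvh_per : ∀ s, vh (s + 1) = vh s := fun s => by simp only [hvh, hgper s]
    have h0 := hcrit vh ⟨hvh_smooth, hvh_per⟩
    rw [firstVariation_value H K hH hK τ v vh hv ⟨hvh_smooth, hvh_per⟩] at h0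
    have hpt : ∀ s, (∑ j, ((g s).1 j * (vh s).2 j - (g s).2 j * (vh s).1 j))
        = ∑ j, ((g s).1 j ^ 2 + (g s).2 j ^ 2) := by
      intro s
      refine Finset.sum_congr rfl fun j _ => ?_
      simp only [hvh]
      ring
    rw [intervalIntegral.integral_congr (fun s _ => hpt s)] at h0
    have hgc : Continuous g := hgsmooth.continuous
    have hc : Continuous (fun s => ∑ j, ((g s).1 j ^ 2 + (g s).2 j ^ 2)) :=
      continuous_finset_sum _ fun j _ =>
        (((continuous_apply j).comp (continuous_fst.comp hgc)).pow 2).add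
          (((continuous_apply j).comp (continuous_snd.comp hgc)).pow 2)
    have hzero : ∀ x ∈ Set.Icc (0:ℝ) 1, (∑ j, ((g x).1 j ^ 2 + (g x).2 j ^ 2)) = 0 := by
      by_contra hcon
      push_neg at hcon
      obtain ⟨x, hx, hxne⟩ := hcon
      have hxpos : 0 < ∑ j, ((g x).1 j ^ 2 + (g x).2 j ^ 2) := by
        rcases lt_or_eq_of_le (Finset.sum_nonneg (fun j _ => by positivity) :
          (0:ℝ) ≤ ∑ j, ((g x).1 j ^ 2 + (g x).2 j ^ 2)) with h | h
        · exact h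
        · exact absurd h.symm hxne
      have := intervalIntegral.integral_pos (f := fun s => ∑ j, ((g s).1 j ^ 2 + (g s).2 j ^ 2))
        one_pos hc.continuousOn (fun s _ => Finset.sum_nonneg fun j _ => by positivity)
        ⟨x, hx, hxpos⟩
      rw [h0] at this
      exact lt_irrefl 0 this
    have hgfract : g (Int.fract t) = g t := by
      have hP : Function.Periodic g 1 := hgper
      have := hP.sub_int_mul_eq (x := t) (n := ⌊t⌋)
      rw [mul_one] at this
      rw [Int.fract]
      exact this
    have hsum0 := hzero (Int.fract t) ⟨Int.fract_nonneg t, (Int.fract_lt_one t).le⟩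
    rw [hgfract] at hsum0
    have hcomp : ∀ j, (g t).1 j ^ 2 + (g t).2 j ^ 2 = 0 := by
      intro j
      have := (Finset.sum_eq_zero_iff_of_nonneg (fun j _ => by positivity)).mp hsum0 j
        (Finset.mem_univ j)
      exact this
    have hgt0 : g t = 0 := by
      have h1 : ∀ j, (g t).1 j = 0 := fun j => by
        have := hcomp j
        nlinarith [sq_nonneg ((g t).1 j), sq_nonneg ((g t).2 j), sq_nonneg ((g t).1 j + 1), sq_nonneg ((g t).1 j - 1)]
      have h2 : ∀ j, (g t).2 j = 0 := fun j => by
        have := hcomp j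
        nlinarith [sq_nonneg ((g t).1 j), sq_nonneg ((g t).2 j)]
      exact Prod.ext (funext h1) (funext h2)
    have := sub_eq_zero.mp (hgt0 : dEL H K τ v t = 0)
    exact this
  · intro heq vh hvhl
    rw [firstVariation_value H K hH hK τ v vh hv hvhl]
    have hz : ∀ t, dEL H K τ v t = 0 := fun t => by
      rw [dEL, sub_eq_zero]
      exact heq t
    have : ∀ t, (∑ j, ((dEL H K τ v t).1 j * (vh t).2 j - (dEL H K τ v t).2 j * (vh t).1 j))
        = 0 := by
      intro t
      rw [hz t]
      simp
    rw [intervalIntegral.integral_congr (fun t _ => this t)]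
    simp
end

section
/- Let N ≥ 1, let F, H_1, …, H_N, K_1, …, K_N : ℝ^{2n} → ℝ be smooth, and let τ ∈ ℝ. Define 𝒜(v) = ∫₀¹ [ p(t)·q̇(t) − F(v(t)) − Σ_{i=1}^N H_i(v(t)) K_i(v(t−τ)) ] dt on loops v = (q,p). If a loop v satisfies v̇(t) = X_F(v(t)) + Σ_{i=1}^N [ H_i(v(t+τ)) X_{K_i}(v(t)) + K_i(v(t−τ)) X_{H_i}(v(t)) ] for all t ∈ ℝ, then v is a critical point of 𝒜. -/
open MeasureTheory intervalIntegral Real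

lemma phase_decomp {n : ℕ} (u : Phase n) :
    ∑ j : Fin n, (u.1 j • ((Pi.single j 1 : Fin n → ℝ), (0 : Fin n → ℝ))
      + u.2 j • ((0 : Fin n → ℝ), (Pi.single j 1 : Fin n → ℝ))) = u := by
  apply Prod.ext <;>
  · simp only [Prod.fst_sum, Prod.snd_sum, Prod.fst_add, Prod.snd_add, Prod.smul_fst,
      Prod.smul_snd, smul_zero, add_zero, zero_add, ← Pi.single_smul, smul_eq_mul, mul_one]
    exact Finset.univ_sum_single _

lemma symForm_hamVF {n : ℕ} (H : Phase n → ℝ) (x u : Phase n) :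
    symForm (hamVF H x) u = fderiv ℝ H x u := by
  simp only [symForm, hamVF]
  have h : ∀ j : Fin n, (fderiv ℝ H x) ((0 : Fin n → ℝ), (Pi.single j 1 : Fin n → ℝ)) * u.2 j
        - -(fderiv ℝ H x) ((Pi.single j 1 : Fin n → ℝ), (0 : Fin n → ℝ)) * u.1 j
      = fderiv ℝ H x (u.1 j • ((Pi.single j 1 : Fin n → ℝ), (0 : Fin n → ℝ))
        + u.2 j • ((0 : Fin n → ℝ), (Pi.single j 1 : Fin n → ℝ))) := by
    intro j
    rw [map_add, _root_.map_smul, _root_.map_smul, smul_eq_mul, smul_eq_mul]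
    ring
  rw [Finset.sum_congr rfl (fun j _ => h j), ← map_sum, phase_decomp]

lemma symForm_add_left {n : ℕ} (u u' w : Phase n) :
    symForm (u + u') w = symForm u w + symForm u' w := by
  simp only [symForm, Prod.fst_add, Prod.snd_add, Pi.add_apply, ← Finset.sum_add_distrib]
  exact Finset.sum_congr rfl fun j _ => by ring

lemma symForm_smul_left {n : ℕ} (c : ℝ) (u w : Phase n) :
    symForm (c • u) w = c * symForm u w := by
  simp only [symForm, Prod.smul_fst, Prod.smul_snd, Pi.smul_apply, smul_eq_mul, Finset.mul_sum]
  exact Finset.sum_congr rfl fun j _ => by ring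

lemma symForm_sum_left {n N : ℕ} (f : Fin N → Phase n) (w : Phase n) :
    symForm (∑ i, f i) w = ∑ i, symForm (f i) w := by
  induction (Finset.univ : Finset (Fin N)) using Finset.induction_on with
  | empty => simp [symForm]
  | @insert a s h ih => simp_all [Finset.sum_insert h, symForm_add_left]

theorem stmt6 {n N : ℕ} (hn : 1 ≤ n) (hN : 1 ≤ N)
    (F : Phase n → ℝ) (H K : Fin N → Phase n → ℝ)
    (hF : ContDiff ℝ (⊤ : ℕ∞) F) (hH : ∀ i, ContDiff ℝ (⊤ : ℕ∞) (H i)) (hK : ∀ i, ContDiff ℝ (⊤ : ℕ∞) (K i))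
    (τ : ℝ) (v : ℝ → Phase n) (hv : IsLoop v)
    (heq : ∀ t : ℝ,
      deriv v t = hamVF F (v t)
        + ∑ i, (H i (v (t + τ)) • hamVF (K i) (v t)
                 + K i (v (t - τ)) • hamVF (H i) (v t))) :
    IsCritPt
      (fun w => ∫ t in (0:ℝ)..1,
        ((∑ j, (w t).2 j * (deriv w t).1 j) - F (w t)
          - ∑ i, H i (w t) * K i (w (t - τ)))) v := by
  intro vh hvh
  obtain ⟨hv1, hv2⟩ := hv
  obtain ⟨hvh1, hvh2⟩ := hvh
  -- basic continuity facts
  have cv : Continuous v := hv1.continuous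
  have cvh : Continuous vh := hvh1.continuous
  have cdv : Continuous (deriv v) := hv1.continuous_deriv (by simp)
  have cdvh : Continuous (deriv vh) := hvh1.continuous_deriv (by simp)
  have dv : Differentiable ℝ v := hv1.differentiable (by simp)
  have dvh : Differentiable ℝ vh := hvh1.differentiable (by simp)
  -- the path and its derivative
  have hpath : ∀ s t : ℝ, HasDerivAt (fun s : ℝ => v t + s • vh t) (vh t) s := by
    intro s t
    have h1 : HasDerivAt (fun s : ℝ => s • vh t) ((1:ℝ) • vh t) s :=
      (hasDerivAt_id s).smul_const (vh t)
    simpa using h1.const_add (v t)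
  have hwderiv : ∀ s t : ℝ, HasDerivAt (fun t => v t + s • vh t)
      (deriv v t + s • deriv vh t) t :=
    fun s t => ((dv t).hasDerivAt).add (((dvh t).hasDerivAt).const_smul s)
  -- G s t : the integrand along the deformed loop
  set G : ℝ → ℝ → ℝ := fun s t =>
    (∑ j, (v t + s • vh t).2 j * (deriv v t + s • deriv vh t).1 j)
      - F (v t + s • vh t)
      - ∑ i, H i (v t + s • vh t) * K i (v (t - τ) + s • vh (t - τ)) with hGdef
  -- D s t : its s-derivative
  set D : ℝ → ℝ → ℝ := fun s t =>
    (∑ j, ((vh t).2 j * (deriv v t + s • deriv vh t).1 j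
          + (v t + s • vh t).2 j * (deriv vh t).1 j))
      - fderiv ℝ F (v t + s • vh t) (vh t)
      - ∑ i, (fderiv ℝ (H i) (v t + s • vh t) (vh t) * K i (v (t - τ) + s • vh (t - τ))
            + H i (v t + s • vh t) * fderiv ℝ (K i) (v (t - τ) + s • vh (t - τ)) (vh (t - τ)))
    with hDdef
  -- A equals integral of G
  have hAeq : ∀ s : ℝ, (∫ t in (0:ℝ)..1,
      ((∑ j, ((fun t => v t + s • vh t) t).2 j * (deriv (fun t => v t + s • vh t) t).1 j)
        - F ((fun t => v t + s • vh t) t)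
        - ∑ i, H i ((fun t => v t + s • vh t) t) * K i ((fun t => v t + s • vh t) (t - τ))))
      = ∫ t in (0:ℝ)..1, G s t := by
    intro s
    refine intervalIntegral.integral_congr fun t _ => ?_
    simp only [hGdef, (hwderiv s t).deriv]
  -- s-derivative of G
  have hDG : ∀ s t : ℝ, HasDerivAt (fun s => G s t) (D s t) s := by
    intro s t
    have h2 : ∀ j : Fin n, HasDerivAt (fun s : ℝ => (v t + s • vh t).2 j)
        ((vh t).2 j) s := by
      intro j
      have : (fun s : ℝ => (v t + s • vh t).2 j)
          = fun s : ℝ => (v t).2 j + s * (vh t).2 j := by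
        funext s; simp [Prod.snd_add, Prod.smul_snd]
      rw [this]
      simpa using (hasDerivAt_mul_const ((vh t).2 j)).const_add ((v t).2 j)
    have h1 : ∀ j : Fin n, HasDerivAt (fun s : ℝ => (deriv v t + s • deriv vh t).1 j)
        ((deriv vh t).1 j) s := by
      intro j
      have : (fun s : ℝ => (deriv v t + s • deriv vh t).1 j)
          = fun s : ℝ => (deriv v t).1 j + s * (deriv vh t).1 j := by
        funext s; simp [Prod.fst_add, Prod.smul_fst]
      rw [this]
      simpa using (hasDerivAt_mul_const ((deriv vh t).1 j)).const_add ((deriv v t).1 j)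
    have hsum : HasDerivAt (fun s : ℝ => ∑ j, (v t + s • vh t).2 j * (deriv v t + s • deriv vh t).1 j)
        (∑ j, ((vh t).2 j * (deriv v t + s • deriv vh t).1 j
          + (v t + s • vh t).2 j * (deriv vh t).1 j)) s := by
      refine HasDerivAt.fun_sum fun j _ => ?_
      exact (h2 j).mul (h1 j)
    have hFc : HasDerivAt (fun s : ℝ => F (v t + s • vh t))
        (fderiv ℝ F (v t + s • vh t) (vh t)) s :=
      (hF.differentiable (by simp) _).hasFDerivAt.comp_hasDerivAt s (hpath s t)
    have hHK : HasDerivAt (fun s : ℝ => ∑ i, H i (v t + s • vh t) * K i (v (t - τ) + s • vh (t - τ)))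
        (∑ i, (fderiv ℝ (H i) (v t + s • vh t) (vh t) * K i (v (t - τ) + s • vh (t - τ))
            + H i (v t + s • vh t) * fderiv ℝ (K i) (v (t - τ) + s • vh (t - τ)) (vh (t - τ)))) s := by
      refine HasDerivAt.fun_sum fun i _ => ?_
      have hHi : HasDerivAt (fun s : ℝ => H i (v t + s • vh t))
          (fderiv ℝ (H i) (v t + s • vh t) (vh t)) s :=
        ((hH i).differentiable (by simp) _).hasFDerivAt.comp_hasDerivAt s (hpath s t)
      have hKi : HasDerivAt (fun s : ℝ => K i (v (t - τ) + s • vh (t - τ)))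
          (fderiv ℝ (K i) (v (t - τ) + s • vh (t - τ)) (vh (t - τ))) s :=
        ((hK i).differentiable (by simp) _).hasFDerivAt.comp_hasDerivAt s (hpath s (t - τ))
      exact hHi.mul hKi
    exact (hsum.sub hFc).sub hHK
  -- joint continuity
  have cpath : Continuous (fun st : ℝ × ℝ => v st.2 + st.1 • vh st.2) :=
    (cv.comp continuous_snd).add (continuous_fst.smul (cvh.comp continuous_snd))
  have cpathτ : Continuous (fun st : ℝ × ℝ => v (st.2 - τ) + st.1 • vh (st.2 - τ)) :=
    (cv.comp (continuous_snd.sub continuous_const)).add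
      (continuous_fst.smul (cvh.comp (continuous_snd.sub continuous_const)))
  have cdpath : Continuous (fun st : ℝ × ℝ => deriv v st.2 + st.1 • deriv vh st.2) :=
    (cdv.comp continuous_snd).add (continuous_fst.smul (cdvh.comp continuous_snd))
  have cG : Continuous (fun st : ℝ × ℝ => G st.1 st.2) := by
    refine Continuous.sub (Continuous.sub ?_ ?_) ?_
    · exact continuous_finset_sum _ fun j _ =>
        (((continuous_apply j).comp cpath.snd).mul ((continuous_apply j).comp cdpath.fst))
    · exact hF.continuous.comp cpath
    · exact continuous_finset_sum _ fun i _ =>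
        (((hH i).continuous.comp cpath).mul ((hK i).continuous.comp cpathτ))
  have cD : Continuous (fun st : ℝ × ℝ => D st.1 st.2) := by
    refine Continuous.sub (Continuous.sub ?_ ?_) ?_
    · refine continuous_finset_sum _ fun j _ => Continuous.add ?_ ?_
      · exact ((continuous_apply j).comp ((cvh.comp continuous_snd).snd)).mul
          ((continuous_apply j).comp cdpath.fst)
      · exact ((continuous_apply j).comp cpath.snd).mul
          ((continuous_apply j).comp ((cdvh.comp continuous_snd).fst))
    · exact ((hF.continuous_fderiv (by simp)).comp cpath).clm_apply (cvh.comp continuous_snd)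
    · refine continuous_finset_sum _ fun i _ => Continuous.add ?_ ?_
      · exact ((((hH i).continuous_fderiv (by simp)).comp cpath).clm_apply
          (cvh.comp continuous_snd)).mul ((hK i).continuous.comp cpathτ)
      · exact (((hH i).continuous.comp cpath)).mul
          ((((hK i).continuous_fderiv (by simp)).comp cpathτ).clm_apply
            (cvh.comp (continuous_snd.sub continuous_const)))
  -- uniform bound on the derivative
  obtain ⟨C, hC⟩ : ∃ C, ∀ st ∈ (Metric.closedBall (0:ℝ) 1 ×ˢ Set.uIcc (0:ℝ) 1),
      ‖(fun st : ℝ × ℝ => D st.1 st.2) st‖ ≤ C :=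
    ((isCompact_closedBall (0:ℝ) 1).prod isCompact_uIcc).exists_bound_of_continuousOn
      cD.continuousOn
  -- differentiation under the integral sign
  have hMain : HasDerivAt (fun s => ∫ t in (0:ℝ)..1, G s t) (∫ t in (0:ℝ)..1, D 0 t) 0 := by
    refine (intervalIntegral.hasDerivAt_integral_of_dominated_loc_of_deriv_le
      (F := G) (F' := D) (bound := fun _ => C) (s := Metric.ball 0 1) (Metric.ball_mem_nhds _ one_pos)
      (Filter.Eventually.of_forall fun s => ?_) ?_ ?_ ?_ ?_ ?_).2
    · exact (cG.comp (continuous_const.prodMk continuous_id)).aestronglyMeasurable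
    · exact ((cG.comp (continuous_const.prodMk continuous_id)).intervalIntegrable 0 1)
    · exact (cD.comp (continuous_const.prodMk continuous_id)).aestronglyMeasurable
    · refine Filter.Eventually.of_forall fun t ht s hs => ?_
      exact hC (s, t) ⟨Metric.ball_subset_closedBall hs, Set.uIoc_subset_uIcc ht⟩
    · exact intervalIntegrable_const
    · exact Filter.Eventually.of_forall fun t _ s _ => hDG s t
  -- coordinate derivative helpers
  have hcoord1 : ∀ (w : ℝ → Phase n), Differentiable ℝ w → ∀ (t : ℝ) (j : Fin n),
      HasDerivAt (fun t => (w t).1 j) ((deriv w t).1 j) t := by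
    intro w hw t j
    have := ((ContinuousLinearMap.proj (R := ℝ) (φ := fun _ : Fin n => ℝ) j).comp
      (ContinuousLinearMap.fst ℝ (Fin n → ℝ) (Fin n → ℝ))).hasFDerivAt.comp_hasDerivAt t
      (hw t).hasDerivAt
    exact this
  have hcoord2 : ∀ (w : ℝ → Phase n), Differentiable ℝ w → ∀ (t : ℝ) (j : Fin n),
      HasDerivAt (fun t => (w t).2 j) ((deriv w t).2 j) t := by
    intro w hw t j
    have := ((ContinuousLinearMap.proj (R := ℝ) (φ := fun _ : Fin n => ℝ) j).comp
      (ContinuousLinearMap.snd ℝ (Fin n → ℝ) (Fin n → ℝ))).hasFDerivAt.comp_hasDerivAt t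
      (hw t).hasDerivAt
    exact this
  -- pieces of D 0
  set C1 : ℝ → ℝ := fun t => ∑ j, ((deriv v t).2 j * (vh t).1 j + (v t).2 j * (deriv vh t).1 j)
    with hC1def
  set φ : Fin N → ℝ → ℝ := fun i t => H i (v (t + τ)) * fderiv ℝ (K i) (v t) (vh t) with hφdef
  set C2 : ℝ → ℝ := fun t => ∑ i, (φ i t - φ i (t - τ)) with hC2def
  set E : ℝ → ℝ := fun t => symForm (deriv v t) (vh t) - fderiv ℝ F (v t) (vh t)
    - ∑ i, (K i (v (t - τ)) * fderiv ℝ (H i) (v t) (vh t)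
          + H i (v (t + τ)) * fderiv ℝ (K i) (v t) (vh t)) with hEdef
  -- E vanishes by the delay Hamiltonian equation
  have hE0 : ∀ t, E t = 0 := by
    intro t
    have h1 : symForm (deriv v t) (vh t) = fderiv ℝ F (v t) (vh t)
        + ∑ i, (H i (v (t + τ)) * fderiv ℝ (K i) (v t) (vh t)
              + K i (v (t - τ)) * fderiv ℝ (H i) (v t) (vh t)) := by
      rw [heq t, symForm_add_left, symForm_sum_left, symForm_hamVF]
      congr 1
      refine Finset.sum_congr rfl fun i _ => ?_
      rw [symForm_add_left, symForm_smul_left, symForm_smul_left, symForm_hamVF, symForm_hamVF]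
    have h2 : ∑ i, (K i (v (t - τ)) * fderiv ℝ (H i) (v t) (vh t)
          + H i (v (t + τ)) * fderiv ℝ (K i) (v t) (vh t))
        = ∑ i, (H i (v (t + τ)) * fderiv ℝ (K i) (v t) (vh t)
              + K i (v (t - τ)) * fderiv ℝ (H i) (v t) (vh t)) :=
      Finset.sum_congr rfl fun i _ => add_comm _ _
    rw [hEdef]
    simp only [h1, h2]
    ring
  -- splitting of D 0
  have hsplit : ∀ t, D 0 t = C1 t + C2 t := by
    intro t
    have hφτ : ∀ i : Fin N, φ i (t - τ) = H i (v t) * fderiv ℝ (K i) (v (t - τ)) (vh (t - τ)) := by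
      intro i
      simp only [hφdef, sub_add_cancel]
    have hD0 : D 0 t = (∑ j, ((vh t).2 j * (deriv v t).1 j + (v t).2 j * (deriv vh t).1 j))
        - fderiv ℝ F (v t) (vh t)
        - ∑ i, (fderiv ℝ (H i) (v t) (vh t) * K i (v (t - τ))
              + H i (v t) * fderiv ℝ (K i) (v (t - τ)) (vh (t - τ))) := by
      simp only [hDdef, zero_smul, add_zero]
    have hEt := hE0 t
    rw [hEdef] at hEt
    rw [hD0, hC1def, hC2def]
    simp only [hφdef, sub_add_cancel]
    simp only [symForm] at hEt
    have hJ : (∑ j, ((vh t).2 j * (deriv v t).1 j + (v t).2 j * (deriv vh t).1 j))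
        = (∑ j, ((deriv v t).1 j * (vh t).2 j - (deriv v t).2 j * (vh t).1 j))
          + ∑ j, ((deriv v t).2 j * (vh t).1 j + (v t).2 j * (deriv vh t).1 j) := by
      rw [← Finset.sum_add_distrib]
      exact Finset.sum_congr rfl fun j _ => by ring
    have hI : (∑ i, (fderiv ℝ (H i) (v t) (vh t) * K i (v (t - τ))
              + H i (v t) * fderiv ℝ (K i) (v (t - τ)) (vh (t - τ))))
        = (∑ i, (K i (v (t - τ)) * fderiv ℝ (H i) (v t) (vh t)
              + H i (v (t + τ)) * fderiv ℝ (K i) (v t) (vh t)))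
          - ∑ i, (H i (v (t + τ)) * fderiv ℝ (K i) (v t) (vh t)
              - H i (v t) * fderiv ℝ (K i) (v (t - τ)) (vh (t - τ))) := by
      rw [← Finset.sum_sub_distrib]
      exact Finset.sum_congr rfl fun i _ => by ring
    rw [hJ, hI]
    linarith [hEt]
  -- continuity of the pieces
  have cC1 : Continuous C1 := by
    rw [hC1def]
    refine continuous_finset_sum _ fun j _ => Continuous.add ?_ ?_
    · exact ((continuous_apply j).comp cdv.snd).mul ((continuous_apply j).comp cvh.fst)
    · exact ((continuous_apply j).comp cv.snd).mul ((continuous_apply j).comp cdvh.fst)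
  have cφ : ∀ i, Continuous (φ i) := by
    intro i
    rw [hφdef]
    exact ((hH i).continuous.comp (cv.comp (continuous_id.add continuous_const))).mul
      ((((hK i).continuous_fderiv (by simp)).comp cv).clm_apply cvh)
  have cC2 : Continuous C2 := by
    rw [hC2def]
    exact continuous_finset_sum _ fun i _ =>
      (cφ i).sub ((cφ i).comp (continuous_id.sub continuous_const))
  -- ∫ C1 = 0 (integration by parts / fundamental theorem + periodicity)
  have hIC1 : (∫ t in (0:ℝ)..1, C1 t) = 0 := by
    have hP : ∀ t : ℝ, HasDerivAt (fun t => ∑ j, (v t).2 j * (vh t).1 j) (C1 t) t := by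
      intro t
      rw [hC1def]
      exact HasDerivAt.fun_sum fun j _ => (hcoord2 v dv t j).mul (hcoord1 vh dvh t j)
    rw [intervalIntegral.integral_eq_sub_of_hasDerivAt (fun t _ => hP t)
      (cC1.intervalIntegrable 0 1)]
    have h1 : v 1 = v 0 := by simpa using hv2 0
    have h2 : vh 1 = vh 0 := by simpa using hvh2 0
    rw [h1, h2, sub_self]
  -- ∫ C2 = 0 (shift invariance by periodicity)
  have hIC2 : (∫ t in (0:ℝ)..1, C2 t) = 0 := by
    have hshift : ∀ i : Fin N, (∫ t in (0:ℝ)..1, φ i (t - τ)) = ∫ t in (0:ℝ)..1, φ i t := by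
      intro i
      have hper : Function.Periodic (φ i) 1 := by
        intro t
        rw [hφdef]
        simp only
        rw [show t + 1 + τ = t + τ + 1 by ring, hv2, hv2, hvh2]
      rw [intervalIntegral.integral_comp_sub_right (φ i) τ]
      rw [show (1:ℝ) - τ = (0 - τ) + 1 by ring]
      rw [hper.intervalIntegral_add_eq (0 - τ) 0, zero_add]
    have cφτ : ∀ i : Fin N, Continuous (fun t : ℝ => φ i (t - τ)) :=
      fun i => (cφ i).comp (continuous_id.sub continuous_const)
    rw [hC2def]
    simp only []
    rw [intervalIntegral.integral_finset_sum (f := fun i t => φ i t - φ i (t - τ))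
      (fun i _ => (((cφ i).sub (cφτ i)).intervalIntegrable 0 1))]
    refine Finset.sum_eq_zero fun i _ => ?_
    rw [intervalIntegral.integral_sub ((cφ i).intervalIntegrable 0 1)
      ((cφτ i).intervalIntegrable 0 1), hshift i, sub_self]
  -- the integral of D 0 vanishes
  have key : (∫ t in (0:ℝ)..1, D 0 t) = 0 := by
    rw [intervalIntegral.integral_congr (g := fun t => C1 t + C2 t) fun t _ => hsplit t]
    rw [intervalIntegral.integral_add (cC1.intervalIntegrable 0 1) (cC2.intervalIntegrable 0 1),
      hIC1, hIC2, add_zero]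
  -- assemble
  have hfe : (fun s : ℝ => ∫ t in (0:ℝ)..1,
      ((∑ j, ((fun t => v t + s • vh t) t).2 j * (deriv (fun t => v t + s • vh t) t).1 j)
        - F ((fun t => v t + s • vh t) t)
        - ∑ i, H i ((fun t => v t + s • vh t) t) * K i ((fun t => v t + s • vh t) (t - τ))))
      = fun s => ∫ t in (0:ℝ)..1, G s t := funext hAeq
  show deriv (fun s : ℝ => ∫ t in (0:ℝ)..1,
      ((∑ j, ((fun t => v t + s • vh t) t).2 j * (deriv (fun t => v t + s • vh t) t).1 j)
        - F ((fun t => v t + s • vh t) t)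
        - ∑ i, H i ((fun t => v t + s • vh t) t) * K i ((fun t => v t + s • vh t) (t - τ)))) 0 = 0
  rw [hfe, hMain.deriv, key]
end
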